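/- Let t̃ ∈ ℝ and H(t) = 2/(3(t − t̃)) for t ≠ t̃. Let P : ℝ → ℝ be three times continuously differentiable, let I be an open interval with t₀ ∈ I, t̃ ∉ I, and let X : I → ℝ be differentiable with H'(t) = −X(t)·P'(X(t)) for all t ∈ I. Assume that at t₀: P(X(t₀)) = 0, X(t₀) ≠ 0, X'(t₀) ≠ 0, P'(X(t₀)) > 0, P'(X(t₀)) + 2X(t₀)·P''(X(t₀)) > 0, and that the sound speed c_s(t) = √(P'(X(t))/(P'(X(t)) + 2X(t)·P''(X(t)))) has vanishing derivative at t₀ (constant sound speed, s = 0). Define Σ(X) = X·P'(X) + 2X²·P''(X) and λ(X) = X²·P''(X) + (2/3)·X³·P'''(X). Then λ(X(t₀))/Σ(X(t₀)) = (1 − c_s(t₀)²)/(6·c_s(t₀)²). -/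

import Mathlib

/-!
Write `c_s² = P_X / (P_X + 2 X P_XX)` as a function of `X`. Since `X'(t₀) ≠ 0` and `c_s > 0`,
`c_s'(t₀) = 0` forces the `X`-derivative of `c_s²` to vanish, which is the relation
`P_XX (P_X + 2 X P_XX) = P_X (3 P_XX + 2 X P_XXX)`. Substituting it into `λ/Σ` leaves
`X P_XX / (3 P_X) = (1 − c_s²)/(6 c_s²)`.
-/

/-- The squared sound speed as a function of `X`, with `f` standing for `P_X`. -/
noncomputable def soundSpeedSq (f : ℝ → ℝ) (Y : ℝ) : ℝ :=
  f Y / (f Y + 2 * Y * deriv f Y)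

theorem hasDerivAt_soundSpeedSq {f : ℝ → ℝ} {Y f'' : ℝ} (hf : DifferentiableAt ℝ f Y)
    (hf' : HasDerivAt (deriv f) f'' Y) (hD : f Y + 2 * Y * deriv f Y ≠ 0) :
    HasDerivAt (soundSpeedSq f)
      ((deriv f Y * (f Y + 2 * Y * deriv f Y) - f Y * (3 * deriv f Y + 2 * Y * f''))
        / (f Y + 2 * Y * deriv f Y) ^ 2) Y := by
  have hden : HasDerivAt (fun Y => f Y + 2 * Y * deriv f Y) (3 * deriv f Y + 2 * Y * f'') Y :=
    (hf.hasDerivAt.add (((hasDerivAt_id' Y).const_mul 2).mul hf')).congr_deriv (by ring)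
  exact hf.hasDerivAt.div hden hD

theorem eq_zero_of_hasDerivAt_of_deriv_sqrt_comp_eq_zero {g X : ℝ → ℝ} {t₀ g' : ℝ}
    (hg : HasDerivAt g g' (X t₀)) (hX : DifferentiableAt ℝ X t₀) (hX' : deriv X t₀ ≠ 0)
    (hpos : 0 < g (X t₀)) (hstat : deriv (fun t => √(g (X t))) t₀ = 0) : g' = 0 := by
  have hchain : HasDerivAt (fun t => √(g (X t))) (1 / (2 * √(g (X t₀))) * (g' * deriv X t₀)) t₀ :=
    (Real.hasDerivAt_sqrt hpos.ne').comp t₀ (hg.comp t₀ hX.hasDerivAt)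
  rw [hchain.deriv] at hstat
  have hsqrt : 0 < √(g (X t₀)) := Real.sqrt_pos.mpr hpos
  simpa [hX', hsqrt.ne'] using hstat

theorem lambda_div_Sigma_eq {Y p₁ p₂ p₃ : ℝ} (hY : Y ≠ 0) (hp₁ : p₁ ≠ 0)
    (hD : p₁ + 2 * Y * p₂ ≠ 0)
    (hrel : p₂ * (p₁ + 2 * Y * p₂) = p₁ * (3 * p₂ + 2 * Y * p₃)) :
    (Y ^ 2 * p₂ + 2 / 3 * Y ^ 3 * p₃) / (Y * p₁ + 2 * Y ^ 2 * p₂)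
      = (1 - p₁ / (p₁ + 2 * Y * p₂)) / (6 * (p₁ / (p₁ + 2 * Y * p₂))) := by
  have hSigma : Y * p₁ + 2 * Y ^ 2 * p₂ = Y * (p₁ + 2 * Y * p₂) := by ring
  have hcs : 1 - p₁ / (p₁ + 2 * Y * p₂) = 2 * Y * p₂ / (p₁ + 2 * Y * p₂) := by
    field_simp
    ring
  rw [hSigma, hcs, ← mul_div_assoc, div_div_div_cancel_right₀ hD,
    div_eq_div_iff (mul_ne_zero hY hD) (mul_ne_zero (by norm_num) hp₁)]
  linear_combination (-2 * Y ^ 2) * hrel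

theorem lambda_over_Sigma_constant_sound_speed_general
    (t₀ a b : ℝ)
    (P : ℝ → ℝ) (hP : ContDiff ℝ 3 P)
    (ht₀ : t₀ ∈ Set.Ioo a b)
    (X : ℝ → ℝ) (hX : DifferentiableOn ℝ X (Set.Ioo a b))
    (hX0 : X t₀ ≠ 0) (hX' : deriv X t₀ ≠ 0)
    (hP1 : 0 < deriv P (X t₀))
    (hP2 : 0 < deriv P (X t₀) + 2 * X t₀ * deriv (deriv P) (X t₀))
    (cs : ℝ → ℝ)
    (hcs : ∀ t : ℝ, cs t = Real.sqrt (deriv P (X t)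
      / (deriv P (X t) + 2 * X t * deriv (deriv P) (X t))))
    (hconst : deriv cs t₀ = 0)
    (Sig lam : ℝ → ℝ)
    (hSig : ∀ Y, Sig Y = Y * deriv P Y + 2 * Y ^ 2 * deriv (deriv P) Y)
    (hlam : ∀ Y, lam Y = Y ^ 2 * deriv (deriv P) Y
      + (2 / 3) * Y ^ 3 * deriv (deriv (deriv P)) Y) :
    lam (X t₀) / Sig (X t₀) = (1 - (cs t₀) ^ 2) / (6 * (cs t₀) ^ 2) := by
  have hP' : Differentiable ℝ (deriv P) :=
    ((hP.of_le (by norm_num)).iterate_deriv' 1 1).differentiable one_ne_zero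
  have hP'' : Differentiable ℝ (deriv (deriv P)) :=
    (hP.iterate_deriv' 1 2).differentiable one_ne_zero
  have hpos : 0 < soundSpeedSq (deriv P) (X t₀) := div_pos hP1 hP2
  have hrel := eq_zero_of_hasDerivAt_of_deriv_sqrt_comp_eq_zero
    (hasDerivAt_soundSpeedSq (hP' _) (hP'' _).hasDerivAt hP2.ne')
    (hX.differentiableAt (isOpen_Ioo.mem_nhds ht₀)) hX' hpos (by rwa [funext hcs] at hconst)
  rw [div_eq_zero_iff, sub_eq_zero] at hrel
  have hcs_sq : cs t₀ ^ 2 = soundSpeedSq (deriv P) (X t₀) := by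
    rw [hcs]
    exact Real.sq_sqrt hpos.le
  rw [hlam, hSig, hcs_sq]
  exact lambda_div_Sigma_eq hX0 hP1.ne' hP2.ne' (hrel.resolve_right (pow_ne_zero 2 hP2.ne'))

/-- Model-independent value of λ/Σ in matter bounce cosmology: with `H(t) = 2/(3(t − ttil))`,
the Friedmann equation `H' = −X·P'(X)`, vanishing pressure `P(X(t₀)) = 0` and constant sound
speed (`c_s'(t₀) = 0`), one has `λ/Σ = (1 − c_s²)/(6c_s²)` at `t₀`. -/
theorem lambda_over_Sigma_constant_sound_speed
    (ttil t₀ a b : ℝ)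
    (P : ℝ → ℝ) (hP : ContDiff ℝ 3 P)
    (H : ℝ → ℝ) (hH : ∀ t : ℝ, t ≠ ttil → H t = 2 / (3 * (t - ttil)))
    (ht₀ : t₀ ∈ Set.Ioo a b) (httil : ttil ∉ Set.Ioo a b)
    (X : ℝ → ℝ) (hX : DifferentiableOn ℝ X (Set.Ioo a b))
    (hFried : ∀ t ∈ Set.Ioo a b, deriv H t = -(X t * deriv P (X t)))
    (hp0 : P (X t₀) = 0) (hX0 : X t₀ ≠ 0) (hX' : deriv X t₀ ≠ 0)
    (hP1 : 0 < deriv P (X t₀))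
    (hP2 : 0 < deriv P (X t₀) + 2 * X t₀ * deriv (deriv P) (X t₀))
    (cs : ℝ → ℝ)
    (hcs : ∀ t : ℝ, cs t = Real.sqrt (deriv P (X t)
      / (deriv P (X t) + 2 * X t * deriv (deriv P) (X t))))
    (hconst : deriv cs t₀ = 0)
    (Sig lam : ℝ → ℝ)
    (hSig : ∀ Y, Sig Y = Y * deriv P Y + 2 * Y ^ 2 * deriv (deriv P) Y)
    (hlam : ∀ Y, lam Y = Y ^ 2 * deriv (deriv P) Y
      + (2 / 3) * Y ^ 3 * deriv (deriv (deriv P)) Y) :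
    lam (X t₀) / Sig (X t₀) = (1 - (cs t₀) ^ 2) / (6 * (cs t₀) ^ 2) :=
  lambda_over_Sigma_constant_sound_speed_general t₀ a b P hP ht₀ X hX hX0 hX' hP1 hP2 cs hcs hconst
    Sig lam hSig hlam
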